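/- Let (I, Ω) be a quiver with doubled arrow set H. Let (V_i)_{i∈I}, (V′_i)_{i∈I}, (W_i)_{i∈I}, (W′_i)_{i∈I} be finite-dimensional complex vector spaces, let x = (x_h)_{h∈H} be a representation of the doubled quiver on (V_i), let x′ = (x′_h)_{h∈H} be a representation on (V′_i), and let f′_i : V′_i → W′_i be linear maps for each i. Assume the pair (x′, f′) is stable, i.e. the only family of subspaces S_i ⊆ ker f′_i satisfying x′_h(S_{s(h)}) ⊆ S_{t(h)} for all h ∈ H is the zero family. Then the linear map ζ : (⊕_{i∈I} Hom(W′_i, V_i)) ⊕ (⊕_{h∈H} Hom(V′_{s(h)}, V_{t(h)})) → ⊕_{i∈I} Hom(V′_i, V_i), whose i-th component is ζ_i(τ, η) = τ_i ∘ f′_i + Σ_{h∈H: s(h)=i} ε(h̄)·( x_{h̄} ∘ η_h + η_{h̄} ∘ x′_h ), is surjective. -/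

import Mathlib

/-! Since all spaces are finite-dimensional, `ζ` is surjective iff its transpose is injective.
The trace pairing `⟨φ, z⟩ = ∑ᵢ tr (φᵢ ∘ zᵢ)` identifies the dual of `⊕ᵢ Hom(V′ᵢ, Vᵢ)` with
`⊕ᵢ Hom(Vᵢ, V′ᵢ)`, and by cyclicity of the trace the transpose of `ζ` sends `φ` to
`(f′ ∘ φ, (φ_{t(h)} ∘ x_h − x′_h ∘ φ_{s(h)})_h)`. So a functional vanishing on the image of `ζ`
is given by a `φ` with `f′ᵢ ∘ φᵢ = 0` that intertwines `x` with `x′`; the images of the `φᵢ` then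
form an `x′`-invariant family inside `ker f′`, which is zero by stability, hence `φ = 0`. -/

-- `Sum.inl h` is the arrow `h ∈ Ω` and `Sum.inr h` its reverse `h̄`.

abbrev DblH (Ω : Type) : Type := Ω ⊕ Ω

def dblSrc {I Ω : Type} (s t : Ω → I) : DblH Ω → I := Sum.elim s t

def dblTgt {I Ω : Type} (s t : Ω → I) : DblH Ω → I := Sum.elim t s

def dblBar {Ω : Type} : DblH Ω → DblH Ω := Sum.elim Sum.inr Sum.inl

def dblEps {Ω : Type} : DblH Ω → ℂ := Sum.elim (fun _ => 1) (fun _ => -1)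

theorem dblSrc_bar {I Ω : Type} (s t : Ω → I) (h : DblH Ω) :
    dblSrc s t (dblBar h) = dblTgt s t h := by cases h <;> rfl

theorem dblTgt_bar {I Ω : Type} (s t : Ω → I) (h : DblH Ω) :
    dblTgt s t (dblBar h) = dblSrc s t h := by cases h <;> rfl

def cmap {I : Type} (J : I → Type) [∀ j, AddCommGroup (J j)] [∀ j, Module ℂ (J j)]
    {X : Type} [AddCommGroup X] [Module ℂ X] {a b : I} (hab : a = b)
    (f : X →ₗ[ℂ] J a) : X →ₗ[ℂ] J b := hab ▸ f

def lcast {I : Type} (A B : I → Type)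
    [∀ j, AddCommGroup (A j)] [∀ j, Module ℂ (A j)]
    [∀ j, AddCommGroup (B j)] [∀ j, Module ℂ (B j)]
    {a a' b b' : I} (ha : a = a') (hb : b = b')
    (f : A a →ₗ[ℂ] B b) : A a' →ₗ[ℂ] B b' := ha ▸ hb ▸ f

open LinearMap Module

namespace LinearMap

section TracePairing

variable {K A B : Type*} [Field K] [AddCommGroup A] [Module K A] [AddCommGroup B] [Module K B]

theorem eq_zero_of_forall_trace_comp_eq_zero [FiniteDimensional K B] (φ : A →ₗ[K] B)
    (hφ : ∀ z : B →ₗ[K] A, trace K B (φ ∘ₗ z) = 0) : φ = 0 := by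
  ext a
  rw [zero_apply, ← forall_dual_apply_eq_zero_iff K]
  intro d
  have hrank_one : φ ∘ₗ dualTensorHom K B A (d ⊗ₜ a) = dualTensorHom K B B (d ⊗ₜ φ a) := by
    ext b; simp [dualTensorHom_apply]
  simpa [hrank_one, trace_eq_contract_apply] using hφ (dualTensorHom K B A (d ⊗ₜ a))

theorem exists_trace_comp_eq [FiniteDimensional K A] [FiniteDimensional K B]
    (g : Dual K (B →ₗ[K] A)) : ∃ φ : A →ₗ[K] B, ∀ z, g z = trace K B (φ ∘ₗ z) := by
  let pairing : (A →ₗ[K] B) →ₗ[K] Dual K (B →ₗ[K] A) := (llcomp K B A B).compr₂ (trace K B)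
  have hinj : Function.Injective pairing := by
    rw [injective_iff_map_eq_zero]
    exact fun φ hφ => eq_zero_of_forall_trace_comp_eq_zero φ fun z => LinearMap.congr_fun hφ z
  have hrank : finrank K (A →ₗ[K] B) = finrank K (Dual K (B →ₗ[K] A)) := by
    rw [Subspace.dual_finrank_eq, finrank_linearMap, finrank_linearMap, mul_comm]
  obtain ⟨φ, hφ⟩ := (injective_iff_surjective_of_finrank_eq_finrank hrank).mp hinj g
  exact ⟨φ, fun z => (LinearMap.congr_fun hφ z).symm⟩

-- The contribution of an arrow `a : P → Q` of the doubled quiver and its reverse `b` to the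
-- trace pairing with `ζ`.
theorem trace_comp_arrow_pair {P Q P' Q' : Type*} [AddCommGroup P] [Module K P] [AddCommGroup Q]
    [Module K Q] [AddCommGroup P'] [Module K P'] [AddCommGroup Q'] [Module K Q']
    [FiniteDimensional K P'] [FiniteDimensional K Q']
    (φP : P →ₗ[K] P') (φQ : Q →ₗ[K] Q') (a : P →ₗ[K] Q) (b : Q →ₗ[K] P)
    (a' : P' →ₗ[K] Q') (b' : Q' →ₗ[K] P') (u : P' →ₗ[K] Q) (v : Q' →ₗ[K] P) :
    -trace K P' (φP ∘ₗ (b ∘ₗ u + v ∘ₗ a')) + trace K Q' (φQ ∘ₗ (a ∘ₗ v + u ∘ₗ b')) =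
      trace K P' ((b' ∘ₗ φQ - φP ∘ₗ b) ∘ₗ u) + trace K Q' ((φQ ∘ₗ a - a' ∘ₗ φP) ∘ₗ v) := by
  have hv := trace_comp_comm' a' (φP ∘ₗ v)
  have hu := trace_comp_comm' b' (φQ ∘ₗ u)
  simp only [comp_add, sub_comp, map_add, map_sub, comp_assoc] at hu hv ⊢
  linear_combination hu - hv

variable {ι : Type*} [Fintype ι] {A B : ι → Type*}
  [∀ k, AddCommGroup (A k)] [∀ k, Module K (A k)] [∀ k, AddCommGroup (B k)] [∀ k, Module K (B k)]

theorem sum_trace_comp_single [DecidableEq ι] (φ : ∀ k, A k →ₗ[K] B k) (k : ι)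
    (z : B k →ₗ[K] A k) :
    ∑ j, trace K (B j) (φ j ∘ₗ (Pi.single k z : ∀ j, B j →ₗ[K] A j) j) =
      trace K (B k) (φ k ∘ₗ z) := by
  rw [Fintype.sum_eq_single k fun j hj => by rw [Pi.single_eq_of_ne hj, comp_zero, map_zero],
    Pi.single_eq_same]

theorem pi_eq_zero_of_forall_sum_trace_comp_eq_zero [∀ k, FiniteDimensional K (B k)]
    (φ : ∀ k, A k →ₗ[K] B k) (hφ : ∀ z : ∀ k, B k →ₗ[K] A k, ∑ k, trace K (B k) (φ k ∘ₗ z k) = 0) :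
    φ = 0 := by
  classical
  funext k
  exact eq_zero_of_forall_trace_comp_eq_zero (φ k) fun z => by
    rw [← sum_trace_comp_single φ k z]; exact hφ _

theorem exists_pi_sum_trace_comp_eq [∀ k, FiniteDimensional K (A k)]
    [∀ k, FiniteDimensional K (B k)] (g : Dual K (∀ k, B k →ₗ[K] A k)) :
    ∃ φ : ∀ k, A k →ₗ[K] B k, ∀ z, g z = ∑ k, trace K (B k) (φ k ∘ₗ z k) := by
  classical
  choose φ hφ using fun k => exists_trace_comp_eq (g ∘ₗ single K (fun k => B k →ₗ[K] A k) k)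
  refine ⟨φ, fun z => ?_⟩
  conv_lhs => rw [← Finset.univ_sum_single z, map_sum]
  exact Finset.sum_congr rfl fun k _ => hφ k (z k)

end TracePairing

end LinearMap

section Casts

variable {I : Type} {A B : I → Type}
  [∀ j, AddCommGroup (A j)] [∀ j, Module ℂ (A j)] [∀ j, AddCommGroup (B j)] [∀ j, Module ℂ (B j)]

theorem cmap_add {X : Type} [AddCommGroup X] [Module ℂ X] {a b : I} (hab : a = b)
    (f g : X →ₗ[ℂ] A a) : cmap A hab (f + g) = cmap A hab f + cmap A hab g := by
  subst hab; rfl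

theorem cmap_smul {X : Type} [AddCommGroup X] [Module ℂ X] {a b : I} (hab : a = b) (c : ℂ)
    (f : X →ₗ[ℂ] A a) : cmap A hab (c • f) = c • cmap A hab f := by
  subst hab; rfl

theorem lcast_add {a a' b b' : I} (ha : a = a') (hb : b = b') (f g : A a →ₗ[ℂ] B b) :
    lcast A B ha hb (f + g) = lcast A B ha hb f + lcast A B ha hb g := by
  subst ha hb; rfl

theorem lcast_smul {a a' b b' : I} (ha : a = a') (hb : b = b') (c : ℂ) (f : A a →ₗ[ℂ] B b) :
    lcast A B ha hb (c • f) = c • lcast A B ha hb f := by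
  subst ha hb; rfl

end Casts

section Zeta

variable {I Ω : Type} [Fintype I] [Fintype Ω] [DecidableEq I] {s t : Ω → I} {V V' W' : I → Type}
  [∀ j, AddCommGroup (V j)] [∀ j, Module ℂ (V j)]
  [∀ j, AddCommGroup (V' j)] [∀ j, Module ℂ (V' j)]
  [∀ j, AddCommGroup (W' j)] [∀ j, Module ℂ (W' j)]
  (x : ∀ h : DblH Ω, V (dblSrc s t h) →ₗ[ℂ] V (dblTgt s t h))
  (x' : ∀ h : DblH Ω, V' (dblSrc s t h) →ₗ[ℂ] V' (dblTgt s t h))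
  (f' : ∀ i, V' i →ₗ[ℂ] W' i)

def IsStablePair : Prop :=
  ∀ S : ∀ i, Submodule ℂ (V' i), (∀ i, S i ≤ ker (f' i)) →
    (∀ h : DblH Ω, ∀ v ∈ S (dblSrc s t h), x' h v ∈ S (dblTgt s t h)) → ∀ i, S i = ⊥

omit [Fintype I] [Fintype Ω] [DecidableEq I] in
variable {x' f'} in
theorem IsStablePair.eq_zero_of_intertwines (hst : IsStablePair x' f')
    (φ : ∀ i, V i →ₗ[ℂ] V' i) (hker : ∀ i, f' i ∘ₗ φ i = 0)
    (hint : ∀ h, φ (dblTgt s t h) ∘ₗ x h = x' h ∘ₗ φ (dblSrc s t h)) : φ = 0 := by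
  have hrange := hst (fun i => range (φ i))
    (fun i => by rintro _ ⟨v, rfl⟩; exact LinearMap.congr_fun (hker i) v)
    (fun h => by rintro _ ⟨v, rfl⟩; exact ⟨x h v, LinearMap.congr_fun (hint h) v⟩)
  funext i
  exact range_eq_bot.mp (hrange i)

noncomputable def zetaArrowTerm (η : ∀ h : DblH Ω, V' (dblSrc s t h) →ₗ[ℂ] V (dblTgt s t h))
    (i : I) (h : DblH Ω) : V' i →ₗ[ℂ] V i :=
  if c : dblSrc s t h = i then
    dblEps (dblBar h) •
      lcast V' V c ((dblTgt_bar s t h).trans c)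
        ((x (dblBar h)) ∘ₗ (cmap V (dblSrc_bar s t h).symm (η h)) +
         (η (dblBar h)) ∘ₗ (cmap V' (dblSrc_bar s t h).symm (x' h)))
  else 0

omit [Fintype I] [Fintype Ω] in
theorem zetaArrowTerm_add (η₁ η₂ : ∀ h : DblH Ω, V' (dblSrc s t h) →ₗ[ℂ] V (dblTgt s t h))
    (i : I) (h : DblH Ω) :
    zetaArrowTerm x x' (η₁ + η₂) i h = zetaArrowTerm x x' η₁ i h + zetaArrowTerm x x' η₂ i h := by
  unfold zetaArrowTerm
  split_ifs
  · simp only [Pi.add_apply, cmap_add, comp_add, add_comp, lcast_add, smul_add]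
    abel
  · rw [add_zero]

omit [Fintype I] [Fintype Ω] in
theorem zetaArrowTerm_smul (c : ℂ) (η : ∀ h : DblH Ω, V' (dblSrc s t h) →ₗ[ℂ] V (dblTgt s t h))
    (i : I) (h : DblH Ω) :
    zetaArrowTerm x x' (c • η) i h = c • zetaArrowTerm x x' η i h := by
  unfold zetaArrowTerm
  split_ifs
  · simp only [Pi.smul_apply, cmap_smul, comp_smul, smul_comp, ← smul_add, lcast_smul, smul_comm c]
  · rw [smul_zero]

omit [Fintype I] [Fintype Ω] in
theorem zetaArrowTerm_eq_single (η : ∀ h : DblH Ω, V' (dblSrc s t h) →ₗ[ℂ] V (dblTgt s t h))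
    (i : I) (h : DblH Ω) :
    zetaArrowTerm x x' η i h =
      Pi.single (M := fun i => V' i →ₗ[ℂ] V i) (dblSrc s t h)
        (zetaArrowTerm x x' η (dblSrc s t h) h) i := by
  by_cases c : dblSrc s t h = i
  · subst c
    rw [Pi.single_eq_same]
  · rw [Pi.single_eq_of_ne' c]
    exact dif_neg c

noncomputable def zeta :
    ((∀ i, W' i →ₗ[ℂ] V i) × (∀ h : DblH Ω, V' (dblSrc s t h) →ₗ[ℂ] V (dblTgt s t h))) →ₗ[ℂ]
      (∀ i, V' i →ₗ[ℂ] V i) where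
  toFun p i := p.1 i ∘ₗ f' i + ∑ h, zetaArrowTerm x x' p.2 i h
  map_add' p q := by
    funext i
    simp only [Prod.fst_add, Prod.snd_add, Pi.add_apply, add_comp, zetaArrowTerm_add,
      Finset.sum_add_distrib]
    abel
  map_smul' c p := by
    funext i
    simp only [Prod.smul_fst, Prod.smul_snd, Pi.smul_apply, smul_comp, zetaArrowTerm_smul,
      ← Finset.smul_sum, smul_add, RingHom.id_apply]

noncomputable def zetaTranspose (φ : ∀ i, V i →ₗ[ℂ] V' i) :
    ∀ h : DblH Ω, V (dblTgt s t h) →ₗ[ℂ] V' (dblSrc s t h)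
  | .inl a => (x' (.inr a) ∘ₗ φ (t a) : V (t a) →ₗ[ℂ] V' (s a)) -
      (φ (s a) ∘ₗ x (.inr a) : V (t a) →ₗ[ℂ] V' (s a))
  | .inr a => (φ (t a) ∘ₗ x (.inl a) : V (s a) →ₗ[ℂ] V' (t a)) -
      (x' (.inl a) ∘ₗ φ (s a) : V (s a) →ₗ[ℂ] V' (t a))

omit [Fintype I] [Fintype Ω] [DecidableEq I] in
theorem intertwines_of_zetaTranspose_eq_zero (φ : ∀ i, V i →ₗ[ℂ] V' i)
    (hφ : zetaTranspose x x' φ = 0) (h : DblH Ω) :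
    φ (dblTgt s t h) ∘ₗ x h = x' h ∘ₗ φ (dblSrc s t h) :=
  match h with
  | .inl a => sub_eq_zero.mp (congrFun hφ (.inr a))
  | .inr a => (sub_eq_zero.mp (congrFun hφ (.inl a))).symm

variable [∀ j, FiniteDimensional ℂ (V' j)] [∀ j, FiniteDimensional ℂ (W' j)]

theorem sum_trace_comp_zeta (φ : ∀ i, V i →ₗ[ℂ] V' i) (τ : ∀ i, W' i →ₗ[ℂ] V i)
    (η : ∀ h : DblH Ω, V' (dblSrc s t h) →ₗ[ℂ] V (dblTgt s t h)) :
    ∑ i, trace ℂ (V' i) (φ i ∘ₗ zeta x x' f' (τ, η) i) =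
      ∑ i, trace ℂ (W' i) ((f' i ∘ₗ φ i) ∘ₗ τ i) +
        ∑ h, trace ℂ (V' (dblSrc s t h)) (zetaTranspose x x' φ h ∘ₗ η h) := by
  have hτ (i : I) :
      trace ℂ (V' i) (φ i ∘ₗ (τ i ∘ₗ f' i)) = trace ℂ (W' i) ((f' i ∘ₗ φ i) ∘ₗ τ i) := by
    rw [← comp_assoc, trace_comp_comm', comp_assoc]
  have hη (h : DblH Ω) : ∑ i, trace ℂ (V' i) (φ i ∘ₗ zetaArrowTerm x x' η i h) =
      trace ℂ (V' (dblSrc s t h)) (φ (dblSrc s t h) ∘ₗ zetaArrowTerm x x' η (dblSrc s t h) h) := by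
    rw [← sum_trace_comp_single φ]
    exact Finset.sum_congr rfl fun i _ => by rw [zetaArrowTerm_eq_single x x' η i h]
  have hsum (i : I) (F : DblH Ω → (V' i →ₗ[ℂ] V i)) :
      trace ℂ (V' i) (φ i ∘ₗ ∑ h, F h) = ∑ h, trace ℂ (V' i) (φ i ∘ₗ F h) :=
    map_sum ((trace ℂ (V' i)).comp (llcomp ℂ _ _ _ (φ i))) F _
  simp only [zeta, LinearMap.coe_mk, AddHom.coe_mk, comp_add, map_add, Finset.sum_add_distrib,
    hτ, hsum]
  rw [Finset.sum_comm]
  simp only [hη, Fintype.sum_sum_type, ← Finset.sum_add_distrib]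
  congr 1
  refine Finset.sum_congr rfl fun a _ => ?_
  rw [zetaArrowTerm, dif_pos rfl, zetaArrowTerm, dif_pos rfl, comp_smul, comp_smul, map_smul,
    map_smul]
  -- The signs `ε` and all vertex casts reduce definitionally once the arrow is `inl a`/`inr a`.
  show (-1 : ℂ) • _ + (1 : ℂ) • _ = _
  rw [neg_one_smul, one_smul]
  exact trace_comp_arrow_pair (φ (s a)) (φ (t a)) (x (.inl a)) (x (.inr a)) (x' (.inl a))
    (x' (.inr a)) (η (.inl a)) (η (.inr a))

theorem zeta_surjective_of_isStablePair [∀ j, FiniteDimensional ℂ (V j)]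
    (hst : IsStablePair x' f') : Function.Surjective (zeta x x' f') := by
  rw [← dualMap_injective_iff, injective_iff_map_eq_zero]
  intro g hg
  obtain ⟨φ, hφ⟩ := exists_pi_sum_trace_comp_eq g
  have hpair (τ : ∀ i, W' i →ₗ[ℂ] V i)
      (η : ∀ h : DblH Ω, V' (dblSrc s t h) →ₗ[ℂ] V (dblTgt s t h)) :
      ∑ i, trace ℂ (W' i) ((f' i ∘ₗ φ i) ∘ₗ τ i) +
        ∑ h, trace ℂ (V' (dblSrc s t h)) (zetaTranspose x x' φ h ∘ₗ η h) = 0 := by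
    rw [← sum_trace_comp_zeta, ← hφ, ← dualMap_apply, hg, LinearMap.zero_apply]
  have hker : (fun i => f' i ∘ₗ φ i) = 0 :=
    pi_eq_zero_of_forall_sum_trace_comp_eq_zero _ fun τ => by simpa using hpair τ 0
  have hψ : zetaTranspose x x' φ = 0 :=
    pi_eq_zero_of_forall_sum_trace_comp_eq_zero _ fun η => by simpa using hpair 0 η
  have hφ0 : φ = 0 :=
    hst.eq_zero_of_intertwines x φ (congrFun hker) (intertwines_of_zetaTranspose_eq_zero x x' φ hψ)
  exact LinearMap.ext fun z => by simp [hφ z, hφ0]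

end Zeta

/-- if `(x′, f′)` is stable, the linear map `ζ` with components
`ζᵢ(τ,η) = τᵢ ∘ f′ᵢ + Σ_{h : s(h)=i} ε(h̄)·(x_{h̄} ∘ η_h + η_{h̄} ∘ x′_h)` is
surjective onto `⊕ᵢ Hom(V′ᵢ, Vᵢ)`. -/
theorem zeta_surjective
    (I Ω : Type) [Fintype I] [Fintype Ω] [DecidableEq I]
    (s t : Ω → I)
    (V V' W' : I → Type)
    [∀ j, AddCommGroup (V j)] [∀ j, Module ℂ (V j)] [∀ j, FiniteDimensional ℂ (V j)]
    [∀ j, AddCommGroup (V' j)] [∀ j, Module ℂ (V' j)] [∀ j, FiniteDimensional ℂ (V' j)]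
    [∀ j, AddCommGroup (W' j)] [∀ j, Module ℂ (W' j)] [∀ j, FiniteDimensional ℂ (W' j)]
    (x : ∀ h : DblH Ω, V (dblSrc s t h) →ₗ[ℂ] V (dblTgt s t h))
    (x' : ∀ h : DblH Ω, V' (dblSrc s t h) →ₗ[ℂ] V' (dblTgt s t h))
    (f' : ∀ i, V' i →ₗ[ℂ] W' i)
    (hstable : ∀ S : ∀ i, Submodule ℂ (V' i),
      (∀ i, S i ≤ LinearMap.ker (f' i)) →
      (∀ h : DblH Ω, ∀ v ∈ S (dblSrc s t h), x' h v ∈ S (dblTgt s t h)) →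
      ∀ i, S i = ⊥) :
    ∀ w : ∀ i, V' i →ₗ[ℂ] V i,
      ∃ (τ : ∀ i, W' i →ₗ[ℂ] V i)
        (η : ∀ h : DblH Ω, V' (dblSrc s t h) →ₗ[ℂ] V (dblTgt s t h)),
        ∀ i : I,
          (τ i) ∘ₗ (f' i) +
          (∑ h : DblH Ω,
            if c : dblSrc s t h = i then
              dblEps (dblBar h) •
                lcast V' V c ((dblTgt_bar s t h).trans c)
                  ((x (dblBar h)) ∘ₗ (cmap V (dblSrc_bar s t h).symm (η h)) +
                   (η (dblBar h)) ∘ₗ (cmap V' (dblSrc_bar s t h).symm (x' h)))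
            else 0) = w i := by
  intro w
  obtain ⟨⟨τ, η⟩, hw⟩ := zeta_surjective_of_isStablePair x x' f' hstable w
  exact ⟨τ, η, congrFun hw⟩
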